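/- arXiv:1407.3619 — 2 statements merged into one kernel-verified Lean document; each statement's English description precedes it below -/
import Mathlib

section
/- Let X and X̃ be real d×n matrices, let r ≥ 1, and suppose ‖X − X̃‖₂ ≤ ε·‖X‖_F for some ε ≥ 0. Then ‖X − X̃_r‖_F ≤ ‖X − X_r‖_F + ‖X‖_F·( sqrt(r)·ε + 2·r^{1/4}·sqrt(ε) ), where M_r denotes the best rank-r approximation of a matrix M. -/
open Matrix

/-- Spectral (ℓ2 operator) norm of a matrix. -/
noncomputable def specNorm {p q : ℕ} (M : Matrix (Fin p) (Fin q) ℝ) : ℝ :=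
  ‖(Matrix.toEuclideanLin M).toContinuousLinearMap‖

/-- Frobenius norm of a matrix. -/
noncomputable def frobNorm {p q : ℕ} (M : Matrix (Fin p) (Fin q) ℝ) : ℝ :=
  Real.sqrt (∑ i, ∑ j, M i j ^ 2)

/-- The d×n rectangular "diagonal" matrix with entries s 0 ≥ s 1 ≥ … on the diagonal. -/
def diagDec (d n : ℕ) (s : ℕ → ℝ) : Matrix (Fin d) (Fin n) ℝ :=
  Matrix.of fun i j => if (i : ℕ) = (j : ℕ) then s i else 0

/-- The same diagonal matrix truncated to its first k diagonal entries. -/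
def diagTrunc (d n : ℕ) (s : ℕ → ℝ) (k : ℕ) : Matrix (Fin d) (Fin n) ℝ :=
  Matrix.of fun i j => if (i : ℕ) = (j : ℕ) ∧ (i : ℕ) < k then s i else 0

/-- A singular value decomposition M = U·Σ·Vᵀ of a d×n real matrix M: U and V are orthogonal
and the diagonal entries of Σ are the singular values σ₁ ≥ σ₂ ≥ … ≥ 0.  Every real matrix
admits such a decomposition. -/
structure SVDData (d n : ℕ) (M : Matrix (Fin d) (Fin n) ℝ) where
  U : Matrix (Fin d) (Fin d) ℝ
  V : Matrix (Fin n) (Fin n) ℝ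
  s : ℕ → ℝ
  orthU : Uᵀ * U = 1
  orthV : Vᵀ * V = 1
  nonneg : ∀ i, 0 ≤ s i
  anti : ∀ i j, i ≤ j → s j ≤ s i
  eq : M = U * diagDec d n s * Vᵀ

/-- The best rank-k approximation M_k of M: the truncated SVD keeping the top k singular
values. -/
def SVDData.trunc {d n : ℕ} {M : Matrix (Fin d) (Fin n) ℝ} (sd : SVDData d n M) (k : ℕ) :
    Matrix (Fin d) (Fin n) ℝ :=
  sd.U * diagTrunc d n sd.s k * sd.Vᵀ


/-!
Let `P`, `Q` be the orthogonal projections onto the top `r` left singular vectors of `X̃` and `X`,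
and `E = X - X̃`. Then `X - X̃_r = P E + (1 - P) X` is an orthogonal decomposition, so
`‖X - X̃_r‖² = ‖P E‖² + ‖X‖² - ‖P X‖²`, while `‖X - X_r‖² = ‖X‖² - ‖Q X‖²`.
A projection of trace at most `r` satisfies `‖P E‖_F ≤ √r ‖E‖₂`, and by Ky Fan's maximum principle
`P` maximises `‖· X̃‖_F` among such projections, so
`‖P X‖ ≥ ‖P X̃‖ - √r ‖E‖₂ ≥ ‖Q X̃‖ - √r ‖E‖₂ ≥ ‖Q X‖ - 2 √r ‖E‖₂`.
Hence `‖X - X̃_r‖² ≤ ‖X - X_r‖² + r ‖E‖₂² + 4 √r ‖E‖₂ ‖X‖`, which gives the bound.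
-/

section Frobenius

attribute [local instance] Matrix.frobeniusNormedAddCommGroup

variable {m n : ℕ}

theorem frobNorm_nonneg (M : Matrix (Fin m) (Fin n) ℝ) : 0 ≤ frobNorm M :=
  Real.sqrt_nonneg _

@[simp]
theorem frobNorm_zero : frobNorm (0 : Matrix (Fin m) (Fin n) ℝ) = 0 := by
  simp [frobNorm]

theorem frobNorm_sq (M : Matrix (Fin m) (Fin n) ℝ) : frobNorm M ^ 2 = ∑ i, ∑ j, M i j ^ 2 :=
  Real.sq_sqrt (by positivity)

theorem frobNorm_sq_eq_trace (M : Matrix (Fin m) (Fin n) ℝ) :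
    frobNorm M ^ 2 = trace (Mᵀ * M) := by
  rw [frobNorm_sq, trace, Finset.sum_comm]
  simp [Matrix.mul_apply, sq]

theorem frobNorm_eq_norm (M : Matrix (Fin m) (Fin n) ℝ) : frobNorm M = ‖M‖ := by
  rw [Matrix.frobenius_norm_def, ← Real.sqrt_eq_rpow, frobNorm]
  simp

theorem abs_frobNorm_sub_frobNorm_le (M N : Matrix (Fin m) (Fin n) ℝ) :
    |frobNorm M - frobNorm N| ≤ frobNorm (M - N) := by
  simpa only [frobNorm_eq_norm] using abs_norm_sub_norm_le M N

theorem frobNorm_transpose (M : Matrix (Fin m) (Fin n) ℝ) : frobNorm Mᵀ = frobNorm M := by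
  simpa only [frobNorm_eq_norm] using Matrix.frobenius_norm_transpose M

theorem frobNorm_mul_mul_transpose {m' n' : ℕ} {U : Matrix (Fin m') (Fin m) ℝ}
    {V : Matrix (Fin n') (Fin n) ℝ} (hU : Uᵀ * U = 1) (hV : Vᵀ * V = 1)
    (M : Matrix (Fin m) (Fin n) ℝ) : frobNorm (U * M * Vᵀ) = frobNorm M := by
  rw [← sq_eq_sq₀ (frobNorm_nonneg _) (frobNorm_nonneg _),
    frobNorm_sq_eq_trace, frobNorm_sq_eq_trace, transpose_mul, transpose_mul, transpose_transpose]
  calc trace (V * (Mᵀ * Uᵀ) * (U * M * Vᵀ)) = trace (V * Mᵀ * (Uᵀ * U) * M * Vᵀ) := by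
        simp only [Matrix.mul_assoc]
    _ = trace (Vᵀ * V * (Mᵀ * M)) := by
        rw [hU, Matrix.mul_one, trace_mul_comm]
        simp only [Matrix.mul_assoc]
    _ = trace (Mᵀ * M) := by rw [hV, Matrix.one_mul]

end Frobenius

section Spectral

open scoped Matrix.Norms.L2Operator

variable {m n : ℕ}

theorem specNorm_eq_norm (M : Matrix (Fin m) (Fin n) ℝ) : specNorm M = ‖M‖ := rfl

theorem specNorm_nonneg (M : Matrix (Fin m) (Fin n) ℝ) : 0 ≤ specNorm M :=
  norm_nonneg _

theorem specNorm_transpose (M : Matrix (Fin m) (Fin n) ℝ) : specNorm Mᵀ = specNorm M := by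
  simpa only [specNorm_eq_norm, Matrix.conjTranspose_eq_transpose_of_trivial]
    using Matrix.l2_opNorm_conjTranspose M

theorem sum_sq_mulVec_le (M : Matrix (Fin m) (Fin n) ℝ) (v : Fin n → ℝ) :
    ∑ i, (M *ᵥ v) i ^ 2 ≤ specNorm M ^ 2 * ∑ j, v j ^ 2 := by
  have h := Matrix.l2_opNorm_mulVec M (WithLp.toLp 2 v)
  rw [← specNorm_eq_norm, EuclideanSpace.norm_eq, EuclideanSpace.norm_eq] at h
  simp only [Real.norm_eq_abs, sq_abs] at h
  calc ∑ i, (M *ᵥ v) i ^ 2 = √(∑ i, (M *ᵥ v) i ^ 2) ^ 2 := (Real.sq_sqrt (by positivity)).symm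
    _ ≤ (specNorm M * √(∑ j, v j ^ 2)) ^ 2 := by gcongr; simpa using h
    _ = specNorm M ^ 2 * ∑ j, v j ^ 2 := by rw [mul_pow, Real.sq_sqrt (by positivity)]

end Spectral

theorem frobNorm_mul_le_specNorm_mul_frobNorm {l m n : ℕ} (A : Matrix (Fin l) (Fin m) ℝ)
    (B : Matrix (Fin m) (Fin n) ℝ) : frobNorm (A * B) ≤ specNorm A * frobNorm B := by
  rw [← sq_le_sq₀ (frobNorm_nonneg _) (by positivity [specNorm_nonneg A, frobNorm_nonneg B]),
    mul_pow, frobNorm_sq, frobNorm_sq, Finset.sum_comm, Finset.sum_comm (f := fun i j => B i j ^ 2),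
    Finset.mul_sum]
  gcongr with j
  exact sum_sq_mulVec_le A fun k => B k j

namespace IsStarProjection

variable {d : ℕ} {P : Matrix (Fin d) (Fin d) ℝ}

theorem transpose_eq (hP : IsStarProjection P) : Pᵀ = P := by
  simpa [Matrix.star_eq_conjTranspose, Matrix.conjTranspose_eq_transpose_of_trivial]
    using hP.isSelfAdjoint.star_eq

theorem frobNorm_sq (hP : IsStarProjection P) : frobNorm P ^ 2 = trace P := by
  rw [frobNorm_sq_eq_trace, hP.transpose_eq, hP.isIdempotentElem.eq]

theorem frobNorm_mul_le_sqrt_trace_mul_specNorm (hP : IsStarProjection P) {n : ℕ}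
    (M : Matrix (Fin d) (Fin n) ℝ) :
    frobNorm (P * M) ≤ √(trace P) * specNorm M := by
  rw [← frobNorm_transpose, transpose_mul, hP.transpose_eq, ← hP.frobNorm_sq,
    Real.sqrt_sq (frobNorm_nonneg P), mul_comm, ← specNorm_transpose M]
  exact frobNorm_mul_le_specNorm_mul_frobNorm Mᵀ P

theorem frobNorm_sq_mul_add_one_sub_mul (hP : IsStarProjection P) {n : ℕ}
    (M N : Matrix (Fin d) (Fin n) ℝ) :
    frobNorm (P * M + (1 - P) * N) ^ 2 = frobNorm (P * M) ^ 2 + frobNorm ((1 - P) * N) ^ 2 := by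
  have hPQ : (P * M)ᵀ * ((1 - P) * N) = 0 := by
    rw [transpose_mul, Matrix.mul_assoc, ← Matrix.mul_assoc Pᵀ, hP.transpose_eq,
      hP.mul_one_sub_self, Matrix.zero_mul, Matrix.mul_zero]
  have hQP : ((1 - P) * N)ᵀ * (P * M) = 0 := by
    rw [transpose_mul, Matrix.mul_assoc, ← Matrix.mul_assoc (1 - P)ᵀ, transpose_sub,
      transpose_one, hP.transpose_eq, hP.one_sub_mul_self, Matrix.zero_mul, Matrix.mul_zero]
  rw [frobNorm_sq_eq_trace, frobNorm_sq_eq_trace, frobNorm_sq_eq_trace,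
    transpose_add, Matrix.add_mul, Matrix.mul_add, Matrix.mul_add, hPQ, hQP]
  simp only [add_zero, zero_add, trace_add]

theorem frobNorm_sq_eq_add (hP : IsStarProjection P) {n : ℕ} (M : Matrix (Fin d) (Fin n) ℝ) :
    frobNorm M ^ 2 = frobNorm (P * M) ^ 2 + frobNorm ((1 - P) * M) ^ 2 := by
  rw [← hP.frobNorm_sq_mul_add_one_sub_mul, ← Matrix.add_mul, add_sub_cancel, Matrix.one_mul]

theorem diag_mem_Icc (hP : IsStarProjection P) (i : Fin d) : P i i ∈ Set.Icc 0 1 := by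
  have hdiag : P i i = ∑ k, P i k ^ 2 := by
    conv_lhs => rw [← hP.isIdempotentElem.eq]
    rw [Matrix.mul_apply]
    refine Finset.sum_congr rfl fun k _ => ?_
    rw [sq, ← transpose_apply P k i, hP.transpose_eq]
  have hsq : P i i ^ 2 ≤ P i i := by
    have := Finset.single_le_sum (f := fun k => P i k ^ 2) (fun k _ => sq_nonneg _)
      (Finset.mem_univ i)
    rwa [← hdiag] at this
  constructor <;> nlinarith [sq_nonneg (P i i)]

theorem conj {k : ℕ} (hP : IsStarProjection P) {U : Matrix (Fin k) (Fin d) ℝ}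
    (hU : Uᵀ * U = 1) : IsStarProjection (U * P * Uᵀ) := by
  refine ⟨?_, ?_⟩
  · change U * P * Uᵀ * (U * P * Uᵀ) = U * P * Uᵀ
    calc U * P * Uᵀ * (U * P * Uᵀ) = U * P * (Uᵀ * U) * P * Uᵀ := by
          simp only [Matrix.mul_assoc]
      _ = U * P * Uᵀ := by
          rw [hU, Matrix.mul_one, Matrix.mul_assoc U P P, hP.isIdempotentElem.eq]
  · rw [IsSelfAdjoint, Matrix.star_eq_conjTranspose, Matrix.conjTranspose_eq_transpose_of_trivial,
      transpose_mul, transpose_mul, transpose_transpose, hP.transpose_eq, Matrix.mul_assoc]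

end IsStarProjection

theorem trace_mul_mul_transpose {k d : ℕ} {U : Matrix (Fin k) (Fin d) ℝ} (hU : Uᵀ * U = 1)
    (P : Matrix (Fin d) (Fin d) ℝ) : trace (U * P * Uᵀ) = trace P := by
  rw [trace_mul_cycle, hU, Matrix.one_mul]

theorem diagDec_mul_transpose (d n : ℕ) (s : ℕ → ℝ) :
    diagDec d n s * (diagDec d n s)ᵀ =
      diagonal fun i : Fin d => if (i : ℕ) < n then s i ^ 2 else 0 := by
  ext i k
  simp only [mul_apply, transpose_apply, diagDec, of_apply, diagonal_apply]
  by_cases hin : (i : ℕ) < n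
  · rw [Finset.sum_eq_single ⟨i, hin⟩ (fun j _ hj => by rw [if_neg (fun h => hj (Fin.ext h.symm)),
      zero_mul]) (by simp)]
    by_cases hik : i = k
    · subst hik
      simp [hin, sq]
    · simp [hik, Fin.val_ne_of_ne (Ne.symm hik)]
  · rw [Finset.sum_eq_zero fun j _ => by
      rw [if_neg (fun h : (i : ℕ) = j => hin (h ▸ j.2)), zero_mul]]
    simp [hin]

theorem diagTrunc_eq_diagDec (d n : ℕ) (s : ℕ → ℝ) (k : ℕ) :
    diagTrunc d n s k = diagDec d n fun i => if i < k then s i else 0 := by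
  ext i j
  simp only [diagTrunc, diagDec, of_apply]
  exact ite_and _ _ _ _

theorem diagTrunc_one_eq_diagonal (d k : ℕ) :
    diagTrunc d d 1 k = diagonal fun i : Fin d => if (i : ℕ) < k then 1 else 0 := by
  ext i j
  simp [diagTrunc, diagonal_apply, ite_and, Fin.ext_iff]

theorem diagTrunc_one_mul_diagDec (d n : ℕ) (s : ℕ → ℝ) (k : ℕ) :
    diagTrunc d d 1 k * diagDec d n s = diagTrunc d n s k := by
  ext i j
  rw [diagTrunc_one_eq_diagonal, diagonal_mul]
  simp only [diagTrunc, diagDec, of_apply]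
  rw [ite_and]
  split_ifs <;> simp

theorem isStarProjection_diagTrunc_one (d k : ℕ) : IsStarProjection (diagTrunc d d 1 k) := by
  rw [diagTrunc_one_eq_diagonal]
  refine ⟨?_, ?_⟩
  · rw [IsIdempotentElem, diagonal_mul_diagonal]
    congr 1
    ext i
    split_ifs <;> simp
  · simp [IsSelfAdjoint, Matrix.star_eq_conjTranspose]

theorem trace_diagTrunc_one_le (d k : ℕ) : trace (diagTrunc d d 1 k) ≤ k := by
  rw [diagTrunc_one_eq_diagonal, trace_diagonal, Finset.sum_boole, Fin.card_filter_val_lt]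
  exact_mod_cast min_le_right d k

theorem sum_mul_le_sum_lt_of_antitone {d r : ℕ} {a q : Fin d → ℝ} (ha : Antitone a)
    (ha0 : ∀ i, 0 ≤ a i) (hq : ∀ i, q i ∈ Set.Icc 0 1) (hqr : ∑ i, q i ≤ r) :
    ∑ i, q i * a i ≤ ∑ i : Fin d, if (i : ℕ) < r then a i else 0 := by
  rcases lt_or_ge r d with hrd | hdr
  · -- Against the threshold `c = a r`, the `i`-th term of the difference is at most
    -- `c * (q i - [i < r])`, and these sum to `c * (∑ q - r) ≤ 0`.
    set c := a ⟨r, hrd⟩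
    have hpt : ∀ i : Fin d, q i * a i - (if (i : ℕ) < r then a i else 0) ≤
        c * (q i - if (i : ℕ) < r then 1 else 0) := by
      intro i
      obtain ⟨hq0, hq1⟩ := hq i
      split_ifs with hi
      · have : c ≤ a i := ha (show i ≤ ⟨r, hrd⟩ from Fin.le_def.2 hi.le)
        nlinarith
      · have : a i ≤ c := ha (show ⟨r, hrd⟩ ≤ i from Fin.le_def.2 (not_lt.1 hi))
        nlinarith
    have hcard : ∑ i : Fin d, (if (i : ℕ) < r then (1 : ℝ) else 0) = r := by
      rw [Finset.sum_boole, Fin.card_filter_val_lt, min_eq_right hrd.le]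
    have hsum := Finset.sum_le_sum fun i (_ : i ∈ Finset.univ) => hpt i
    rw [Finset.sum_sub_distrib, ← Finset.mul_sum, Finset.sum_sub_distrib, hcard] at hsum
    nlinarith [ha0 ⟨r, hrd⟩]
  · refine Finset.sum_le_sum fun i _ => ?_
    rw [if_pos (i.2.trans_le hdr)]
    exact mul_le_of_le_one_left (ha0 i) (hq i).2

namespace IsStarProjection

variable {d : ℕ} {Q : Matrix (Fin d) (Fin d) ℝ}

theorem frobNorm_sq_mul_diagDec (hQ : IsStarProjection Q) (n : ℕ) (s : ℕ → ℝ) :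
    frobNorm (Q * diagDec d n s) ^ 2 =
      ∑ i : Fin d, Q i i * if (i : ℕ) < n then s i ^ 2 else 0 := by
  rw [frobNorm_sq_eq_trace, transpose_mul, hQ.transpose_eq, Matrix.mul_assoc,
    ← Matrix.mul_assoc Q, hQ.isIdempotentElem.eq, trace_mul_comm, Matrix.mul_assoc,
    diagDec_mul_transpose, trace]
  simp only [diag_apply, mul_diagonal]

/-- Ky Fan's maximum principle for a diagonal matrix: the diagonal of a projection of trace at most
`k` is a fractional selection of at most `k` of the decreasing squared singular values. -/
theorem frobNorm_mul_diagDec_le (hQ : IsStarProjection Q) {k : ℕ} (hQk : trace Q ≤ k) {n : ℕ}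
    {s : ℕ → ℝ} (hs0 : ∀ i, 0 ≤ s i) (hs : Antitone s) :
    frobNorm (Q * diagDec d n s) ≤ frobNorm (diagTrunc d n s k) := by
  have hone := (IsStarProjection.one (Matrix (Fin d) (Fin d) ℝ)).frobNorm_sq_mul_diagDec n
  simp only [Matrix.one_mul, one_apply_eq, one_mul] at hone
  rw [← sq_le_sq₀ (frobNorm_nonneg _) (frobNorm_nonneg _), hQ.frobNorm_sq_mul_diagDec,
    diagTrunc_eq_diagDec, hone]
  calc _ ≤ ∑ i : Fin d, if (i : ℕ) < k then (if (i : ℕ) < n then s i ^ 2 else 0) else 0 := by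
        refine sum_mul_le_sum_lt_of_antitone (fun i j hij => ?_) (fun i => ?_)
          hQ.diag_mem_Icc hQk
        · split_ifs with hj hi hi
          · exact pow_le_pow_left₀ (hs0 _) (hs hij) 2
          · exact absurd (lt_of_le_of_lt (show (i : ℕ) ≤ j from hij) hj) hi
          · positivity
          · rfl
        · split_ifs <;> positivity
    _ = _ := Finset.sum_congr rfl fun i _ => by split_ifs <;> simp

end IsStarProjection

namespace SVDData

variable {d n : ℕ} {M : Matrix (Fin d) (Fin n) ℝ} (sd : SVDData d n M)

def leftProj (k : ℕ) : Matrix (Fin d) (Fin d) ℝ := sd.U * diagTrunc d d 1 k * sd.Uᵀ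

theorem isStarProjection_leftProj (k : ℕ) : IsStarProjection (sd.leftProj k) :=
  (isStarProjection_diagTrunc_one d k).conj sd.orthU

theorem trace_leftProj_le (k : ℕ) : trace (sd.leftProj k) ≤ k := by
  rw [leftProj, trace_mul_mul_transpose sd.orthU]
  exact trace_diagTrunc_one_le d k

theorem trunc_eq_leftProj_mul (k : ℕ) : sd.trunc k = sd.leftProj k * M := by
  calc sd.trunc k = sd.U * diagTrunc d d 1 k * (sd.Uᵀ * sd.U) * diagDec d n sd.s * sd.Vᵀ := by
        rw [sd.orthU, Matrix.mul_one, Matrix.mul_assoc sd.U, diagTrunc_one_mul_diagDec, trunc]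
    _ = sd.leftProj k * (sd.U * diagDec d n sd.s * sd.Vᵀ) := by
        simp only [leftProj, Matrix.mul_assoc]
    _ = sd.leftProj k * M := congrArg _ sd.eq.symm

theorem frobNorm_leftProj_mul_le (k : ℕ) {m : ℕ} (N : Matrix (Fin d) (Fin m) ℝ) :
    frobNorm (sd.leftProj k * N) ≤ √k * specNorm N :=
  ((sd.isStarProjection_leftProj k).frobNorm_mul_le_sqrt_trace_mul_specNorm N).trans <|
    mul_le_mul_of_nonneg_right (Real.sqrt_le_sqrt (sd.trace_leftProj_le k)) (specNorm_nonneg N)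

theorem frobNorm_sub_trunc_sq (k : ℕ) (X : Matrix (Fin d) (Fin n) ℝ) :
    frobNorm (X - sd.trunc k) ^ 2 =
      frobNorm (sd.leftProj k * (X - M)) ^ 2 +
        (frobNorm X ^ 2 - frobNorm (sd.leftProj k * X) ^ 2) := by
  have hP := sd.isStarProjection_leftProj k
  have hX : X - sd.trunc k = sd.leftProj k * (X - M) + (1 - sd.leftProj k) * X := by
    rw [sd.trunc_eq_leftProj_mul, Matrix.mul_sub, Matrix.sub_mul, Matrix.one_mul]
    abel
  rw [hX, hP.frobNorm_sq_mul_add_one_sub_mul, hP.frobNorm_sq_eq_add X]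
  ring

theorem frobNorm_mul_le_frobNorm_trunc {Q : Matrix (Fin d) (Fin d) ℝ} (hQ : IsStarProjection Q)
    {k : ℕ} (hQk : trace Q ≤ k) : frobNorm (Q * M) ≤ frobNorm (sd.trunc k) := by
  have hUUt : sd.Uᵀᵀ * sd.Uᵀ = 1 := by
    rw [transpose_transpose]
    exact mul_eq_one_comm.mp sd.orthU
  have hQ' : IsStarProjection (sd.Uᵀ * Q * sd.U) := hQ.conj hUUt
  have hQ'k : trace (sd.Uᵀ * Q * sd.U) ≤ k := (trace_mul_mul_transpose hUUt Q).trans_le hQk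
  have hQM : Q * M = sd.U * (sd.Uᵀ * Q * sd.U * diagDec d n sd.s) * sd.Vᵀ := by
    calc Q * M = sd.Uᵀᵀ * sd.Uᵀ * Q * (sd.U * diagDec d n sd.s * sd.Vᵀ) := by
          rw [hUUt, Matrix.one_mul, ← sd.eq]
      _ = sd.U * (sd.Uᵀ * Q * sd.U * diagDec d n sd.s) * sd.Vᵀ := by
          simp only [transpose_transpose, Matrix.mul_assoc]
  rw [hQM, trunc, frobNorm_mul_mul_transpose sd.orthU sd.orthV,
    frobNorm_mul_mul_transpose sd.orthU sd.orthV]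
  exact hQ'.frobNorm_mul_diagDec_le hQ'k sd.nonneg fun i j h => sd.anti i j h

end SVDData

theorem le_add_add_two_sqrt_of_sq_le {D F G K ρ s : ℝ} (hF : 0 ≤ F) (hG : 0 ≤ G) (hK : 0 ≤ K)
    (hs : 0 ≤ s) (hGFK : G ^ 2 = F ^ 2 - K ^ 2) (hD : D ^ 2 ≤ s ^ 2 + (F ^ 2 - ρ ^ 2))
    (hρ : K - 2 * s ≤ ρ) : D ≤ G + s + 2 * √(s * F) := by
  have hKF : K ≤ F := by nlinarith
  have hKρ : K ^ 2 - ρ ^ 2 ≤ 4 * s * F := by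
    rcases le_or_gt K (2 * s) with hK2s | hK2s
    · nlinarith
    · nlinarith
  have hsqrt : √(s * F) ^ 2 = s * F := Real.sq_sqrt (mul_nonneg hs hF)
  refine (le_abs_self D).trans (abs_le_of_sq_le_sq ?_ (by positivity))
  nlinarith [Real.sqrt_nonneg (s * F)]

theorem sqrt_mul_add_two_sqrt_le_of_le_mul {r ε e F : ℝ} (hr : 0 ≤ r) (hε : 0 ≤ ε) (hF : 0 ≤ F)
    (he : e ≤ ε * F) :
    √r * e + 2 * √(√r * e * F) ≤ F * (√r * ε + 2 * r ^ ((1 : ℝ) / 4) * √ε) := by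
  have hquarter : √(√r) = r ^ ((1 : ℝ) / 4) := by
    rw [Real.sqrt_eq_rpow, Real.sqrt_eq_rpow, ← Real.rpow_mul hr]
    norm_num
  have hsqrt : √(√r * e * F) ≤ r ^ ((1 : ℝ) / 4) * √ε * F :=
    calc √(√r * e * F) ≤ √(√r * ε * F ^ 2) := Real.sqrt_le_sqrt (by
          nlinarith [mul_le_mul_of_nonneg_left he (mul_nonneg (Real.sqrt_nonneg r) hF)])
      _ = r ^ ((1 : ℝ) / 4) * √ε * F := by
          rw [Real.sqrt_mul (by positivity), Real.sqrt_mul (Real.sqrt_nonneg r), Real.sqrt_sq hF,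
            hquarter]
  nlinarith [mul_le_mul_of_nonneg_left he (Real.sqrt_nonneg r)]

theorem spectral_to_frobenius_translation_general
    {d n : ℕ} (X Xt : Matrix (Fin d) (Fin n) ℝ) (r : ℕ)
    (ε : ℝ) (hε : 0 ≤ ε) (h : specNorm (X - Xt) ≤ ε * frobNorm X)
    (sX : SVDData d n X) (sXt : SVDData d n Xt) :
    frobNorm (X - sXt.trunc r) ≤ frobNorm (X - sX.trunc r) +
      frobNorm X * (Real.sqrt r * ε + 2 * (r : ℝ) ^ ((1 : ℝ) / 4) * Real.sqrt ε) := by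
  set P := sXt.leftProj r
  set Q := sX.leftProj r
  set s := √r * specNorm (X - Xt)
  have hPE : frobNorm (P * (X - Xt)) ≤ s := sXt.frobNorm_leftProj_mul_le r _
  have hQE : frobNorm (Q * (X - Xt)) ≤ s := sX.frobNorm_leftProj_mul_le r _
  have hKyFan : frobNorm (Q * Xt) ≤ frobNorm (P * Xt) := by
    rw [← sXt.trunc_eq_leftProj_mul]
    exact sXt.frobNorm_mul_le_frobNorm_trunc (sX.isStarProjection_leftProj r)
      (sX.trace_leftProj_le r)
  have hρ : frobNorm (Q * X) - 2 * s ≤ frobNorm (P * X) := by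
    have hQX := abs_frobNorm_sub_frobNorm_le (Q * X) (Q * Xt)
    have hPX := abs_frobNorm_sub_frobNorm_le (P * X) (P * Xt)
    rw [← Matrix.mul_sub] at hQX hPX
    linarith [abs_le.1 hQX, abs_le.1 hPX]
  have hD : frobNorm (X - sXt.trunc r) ^ 2 ≤ s ^ 2 + (frobNorm X ^ 2 - frobNorm (P * X) ^ 2) := by
    rw [sXt.frobNorm_sub_trunc_sq r X]
    gcongr
    exact frobNorm_nonneg _
  have hG : frobNorm (X - sX.trunc r) ^ 2 = frobNorm X ^ 2 - frobNorm (Q * X) ^ 2 := by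
    simpa using sX.frobNorm_sub_trunc_sq r X
  calc frobNorm (X - sXt.trunc r)
      ≤ frobNorm (X - sX.trunc r) + (s + 2 * √(s * frobNorm X)) := by
        rw [← add_assoc]
        exact le_add_add_two_sqrt_of_sq_le (frobNorm_nonneg X) (frobNorm_nonneg _)
          (frobNorm_nonneg _) (by positivity [specNorm_nonneg (X - Xt)]) hG hD hρ
    _ ≤ _ := by
        gcongr
        exact sqrt_mul_add_two_sqrt_le_of_le_mul (Nat.cast_nonneg r) hε (frobNorm_nonneg X) h

/-- Spectral-to-Frobenius error translation: if X and X̃ are real d×n matrices, r ≥ 1, and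
‖X − X̃‖₂ ≤ ε·‖X‖_F with ε ≥ 0, then (M_r denoting the truncated SVD of M)
‖X − X̃_r‖_F ≤ ‖X − X_r‖_F + ‖X‖_F·(sqrt(r)·ε + 2·r^{1/4}·sqrt(ε)). -/
theorem spectral_to_frobenius_translation
    {d n : ℕ} (X Xt : Matrix (Fin d) (Fin n) ℝ) (r : ℕ) (hr : 1 ≤ r)
    (ε : ℝ) (hε : 0 ≤ ε) (h : specNorm (X - Xt) ≤ ε * frobNorm X)
    (sX : SVDData d n X) (sXt : SVDData d n Xt) :
    frobNorm (X - sXt.trunc r) ≤ frobNorm (X - sX.trunc r) +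
      frobNorm X * (Real.sqrt r * ε + 2 * (r : ℝ) ^ ((1 : ℝ) / 4) * Real.sqrt ε) :=
  spectral_to_frobenius_translation_general X Xt r ε hε h sX sXt
end

section
/- Let X be a real d×n matrix of rank at most r, let X̃ be a real d×n matrix with ‖X̃ − X‖₂ ≤ ε·‖X‖_F for some ε ≥ 0, and let X̂ = X̃_r be the best rank-r approximation of X̃. Then ‖X̂ − X‖_F ≤ 2·sqrt(2r)·ε·‖X‖_F. -/
open Matrix

/-! Writing `X̃ = U Σ Vᵀ`, the matrix `X̃ - X̂` is `U` times the tail of `Σ` times `Vᵀ`, so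
`‖X̃ - X̂‖₂ ≤ σ_{r+1}` (which is `sXt.s r`: singular values are indexed from `0`). Since `X` has
rank at most `r`, its kernel meets the span of the first `r + 1` columns of `V`, on which `X̃`
stretches by at least `σ_{r+1}`; hence `σ_{r+1} ≤ ‖X̃ - X‖₂` and, by the triangle inequality,
`‖X̂ - X‖₂ ≤ 2 ‖X̃ - X‖₂`. Finally `X̂ - X` has rank at most `2r`, and for any matrix `‖M‖_F²` is
the trace of `Mᵀ M`, a sum of at most `rank M` nonzero eigenvalues, each at most `‖M‖₂²`. -/

open scoped Matrix.Norms.L2Operator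
open WithLp

theorem norm_toLp_two_sq {ι : Type*} [Fintype ι] (x : ι → ℝ) :
    ‖toLp 2 x‖ ^ 2 = ∑ i, x i ^ 2 := by
  simp [EuclideanSpace.norm_sq_eq]

namespace Matrix

section Rank

variable {K m n : Type*} [Field K] [Fintype n]

theorem rank_add_le (A B : Matrix m n K) : (A + B).rank ≤ A.rank + B.rank := by
  rw [rank, rank, rank, mulVecLin_add]
  exact (Submodule.finrank_mono (LinearMap.range_add_le _ _)).trans
    (Submodule.finrank_add_le_finrank_add_finrank _ _)

theorem rank_neg (A : Matrix m n K) : (-A).rank = A.rank := by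
  have h : (-A).mulVecLin = -A.mulVecLin := by ext; simp
  rw [rank, rank, h, LinearMap.range_neg]

theorem rank_sub_le (A B : Matrix m n K) : (A - B).rank ≤ A.rank + B.rank := by
  simpa [sub_eq_add_neg, rank_neg] using rank_add_le A (-B)

theorem exists_ne_zero_mulVec_eq_zero_of_rank_le {n r : ℕ} (A : Matrix m (Fin n) K)
    (hA : A.rank ≤ r) (hr : r < n) :
    ∃ w : Fin n → K, w ≠ 0 ∧ (∀ j : Fin n, r < j → w j = 0) ∧ A *ᵥ w = 0 := by
  let ι : Fin (r + 1) → Fin n := Fin.castLE hr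
  let L := A.mulVecLin.rangeRestrict ∘ₗ Function.ExtendByZero.linearMap K ι
  have hL : LinearMap.ker L ≠ ⊥ := L.ker_ne_bot_of_finrank_lt <| by
    rw [Module.finrank_fin_fun]
    exact Nat.lt_succ_of_le hA
  obtain ⟨c, hc, hc0⟩ := Submodule.exists_mem_ne_zero_of_ne_bot hL
  refine ⟨Function.extend ι c 0, ?_, fun j hj => ?_, ?_⟩
  · obtain ⟨a, ha⟩ := Function.ne_iff.1 hc0
    exact Function.ne_iff.2 ⟨ι a, by rwa [(Fin.castLE_injective hr).extend_apply]⟩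
  · refine Function.extend_apply' _ _ _ fun ⟨a, ha⟩ => ?_
    have := a.2
    simp only [← ha, ι, Fin.val_castLE] at hj
    omega
  · exact congrArg Subtype.val (LinearMap.mem_ker.1 hc)

end Rank

section L2OpNorm

variable {l m n : Type*} [Fintype m] [Fintype n] [DecidableEq n]

theorem norm_toLp_mulVec_le (A : Matrix m n ℝ) (x : n → ℝ) :
    ‖toLp 2 (A *ᵥ x)‖ ≤ ‖A‖ * ‖toLp 2 x‖ :=
  l2_opNorm_mulVec A (toLp 2 x)

theorem l2_opNorm_le_bound {A : Matrix m n ℝ} {C : ℝ} (hC : 0 ≤ C)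
    (h : ∀ x, ‖toLp 2 (A *ᵥ x)‖ ≤ C * ‖toLp 2 x‖) : ‖A‖ ≤ C :=
  ContinuousLinearMap.opNorm_le_bound _ hC fun x => h x.ofLp

theorem norm_toLp_mulVec_of_transpose_mul_self_eq_one {U : Matrix m n ℝ} (hU : Uᵀ * U = 1)
    (x : n → ℝ) : ‖toLp 2 (U *ᵥ x)‖ = ‖toLp 2 x‖ := by
  have h : (U *ᵥ x) ⬝ᵥ (U *ᵥ x) = x ⬝ᵥ x := by
    rw [dotProduct_mulVec, ← mulVec_transpose, mulVec_mulVec, hU, one_mulVec]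
  rw [← sq_eq_sq₀ (norm_nonneg _) (norm_nonneg _), norm_toLp_two_sq, norm_toLp_two_sq]
  simpa only [dotProduct, sq] using h

theorem l2_opNorm_le_one_of_transpose_mul_self_eq_one {U : Matrix m n ℝ} (hU : Uᵀ * U = 1) :
    ‖U‖ ≤ 1 :=
  l2_opNorm_le_bound zero_le_one fun x => by
    rw [norm_toLp_mulVec_of_transpose_mul_self_eq_one hU, one_mul]

omit [Fintype m] in
theorem l2_opNorm_mul_mul_transpose_le [Fintype l] [DecidableEq l] {U : Matrix l l ℝ}
    {V : Matrix n n ℝ} (hU : Uᵀ * U = 1) (hV : Vᵀ * V = 1) (A : Matrix l n ℝ) :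
    ‖U * A * Vᵀ‖ ≤ ‖A‖ := by
  have hVt : ‖Vᵀ‖ ≤ 1 := by
    rw [← conjTranspose_eq_transpose_of_trivial, l2_opNorm_conjTranspose]
    exact l2_opNorm_le_one_of_transpose_mul_self_eq_one hV
  calc ‖U * A * Vᵀ‖ ≤ ‖U‖ * ‖A‖ * ‖Vᵀ‖ :=
        (l2_opNorm_mul _ _).trans (by gcongr; exact l2_opNorm_mul _ _)
    _ ≤ 1 * ‖A‖ * 1 := by gcongr; exact l2_opNorm_le_one_of_transpose_mul_self_eq_one hU
    _ = ‖A‖ := by ring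

theorem eigenvalues_conjTranspose_mul_self_le (A : Matrix m n ℝ) (i : n) :
    (isHermitian_conjTranspose_mul_self A).eigenvalues i ≤ ‖A‖ ^ 2 := by
  set hA := isHermitian_conjTranspose_mul_self A
  have h := l2_opNorm_mulVec (Aᴴ * A) (hA.eigenvectorBasis i)
  simp only [hA.mulVec_eigenvectorBasis, l2_opNorm_conjTranspose_mul_self, map_smul, norm_smul,
    PiLp.continuousLinearEquiv_symm_apply, WithLp.toLp_ofLp, hA.eigenvectorBasis.orthonormal.1 i,
    mul_one, Real.norm_eq_abs, ← sq] at h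
  exact (le_abs_self _).trans h

theorem trace_conjTranspose_mul_self_le (A : Matrix m n ℝ) :
    (Aᴴ * A).trace ≤ A.rank * ‖A‖ ^ 2 := by
  classical
  set hA := isHermitian_conjTranspose_mul_self A
  calc (Aᴴ * A).trace = ∑ i with hA.eigenvalues i ≠ 0, hA.eigenvalues i := by
        rw [hA.trace_eq_sum_eigenvalues, Finset.sum_filter_ne_zero]
        rfl
    _ ≤ (Finset.univ.filter fun i => hA.eigenvalues i ≠ 0).card • ‖A‖ ^ 2 :=
        Finset.sum_le_card_nsmul _ _ _ fun i _ => eigenvalues_conjTranspose_mul_self_le A i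
    _ = A.rank * ‖A‖ ^ 2 := by
        rw [nsmul_eq_mul, ← rank_conjTranspose_mul_self, hA.rank_eq_card_non_zero_eigs,
          Fintype.card_subtype]

end L2OpNorm

end Matrix

theorem frobNorm_eq_sqrt_trace {p q : ℕ} (A : Matrix (Fin p) (Fin q) ℝ) :
    frobNorm A = √(Aᴴ * A).trace := by
  rw [frobNorm, trace, Finset.sum_comm]
  simp [mul_apply, sq]

theorem frobNorm_le_sqrt_rank_mul_l2_opNorm {p q : ℕ} (A : Matrix (Fin p) (Fin q) ℝ) :
    frobNorm A ≤ √A.rank * ‖A‖ := by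
  rw [frobNorm_eq_sqrt_trace, ← Real.sqrt_sq (norm_nonneg A), ← Real.sqrt_mul (Nat.cast_nonneg _)]
  exact Real.sqrt_le_sqrt (trace_conjTranspose_mul_self_le A)

section RectangularDiagonal

variable {d n : ℕ}

theorem diagDec_mulVec_apply (t : ℕ → ℝ) (x : Fin n → ℝ) (i : Fin d) :
    (diagDec d n t *ᵥ x) i = if h : (i : ℕ) < n then t i * x ⟨i, h⟩ else 0 := by
  simp only [mulVec, dotProduct, diagDec, of_apply, ite_mul, zero_mul]
  split_ifs with h
  · rw [Finset.sum_eq_single ⟨i, h⟩ (fun j _ hj => if_neg fun hij => hj (Fin.ext hij.symm))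
      (by simp)]
    simp
  · exact Finset.sum_eq_zero fun j _ => if_neg fun hij : (i : ℕ) = j => h (hij ▸ j.2)

theorem norm_toLp_diagDec_mulVec_sq (t : ℕ → ℝ) (x : Fin n → ℝ) :
    ‖toLp 2 (diagDec d n t *ᵥ x)‖ ^ 2 = ∑ j : Fin n, if (j : ℕ) < d then (t j * x j) ^ 2 else 0 := by
  -- both sides are sums of `F` over an initial segment of `ℕ` containing its support
  set F : ℕ → ℝ := fun i => if h : i < n then (if i < d then (t i * x ⟨i, h⟩) ^ 2 else 0) else 0
  have hF : ∀ k, min d n ≤ k → ∑ i ∈ Finset.range k, F i = ∑ i ∈ Finset.range (min d n), F i :=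
    fun k hk => (Finset.sum_subset (Finset.range_subset_range.2 hk) fun i _ hi => by
      simp only [Finset.mem_range, lt_min_iff, not_and_or, not_lt] at hi
      rcases hi with hi | hi <;> simp [F, not_lt.2 hi]).symm
  calc ‖toLp 2 (diagDec d n t *ᵥ x)‖ ^ 2 = ∑ i : Fin d, F i := by
        rw [norm_toLp_two_sq]
        exact Finset.sum_congr rfl fun i _ => by simp [F, diagDec_mulVec_apply, i.2]
    _ = ∑ j : Fin n, F j := by
        rw [Fin.sum_univ_eq_sum_range F, Fin.sum_univ_eq_sum_range F, hF d (min_le_left _ _),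
          hF n (min_le_right _ _)]
    _ = _ := by simp [F]

theorem l2_opNorm_diagDec_le (t : ℕ → ℝ) {C : ℝ} (hC : 0 ≤ C)
    (ht : ∀ j, j < d → j < n → |t j| ≤ C) : ‖diagDec d n t‖ ≤ C :=
  l2_opNorm_le_bound hC fun x => by
    rw [← sq_le_sq₀ (norm_nonneg _) (by positivity), mul_pow, norm_toLp_diagDec_mulVec_sq,
      norm_toLp_two_sq, Finset.mul_sum]
    refine Finset.sum_le_sum fun j _ => ?_
    split_ifs with hj
    · rw [mul_pow, ← sq_abs (t j)]
      gcongr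
      exact ht j hj j.2
    · positivity

theorem mul_norm_toLp_le_norm_toLp_diagDec_mulVec {s : ℕ → ℝ} (hs : Antitone s) {r : ℕ}
    (hs0 : 0 ≤ s r) (hr : r < d) {w : Fin n → ℝ} (hw : ∀ j : Fin n, r < j → w j = 0) :
    s r * ‖toLp 2 w‖ ≤ ‖toLp 2 (diagDec d n s *ᵥ w)‖ := by
  rw [← sq_le_sq₀ (by positivity) (norm_nonneg _), mul_pow, norm_toLp_diagDec_mulVec_sq,
    norm_toLp_two_sq, Finset.mul_sum]
  refine Finset.sum_le_sum fun j _ => ?_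
  by_cases hj : (j : ℕ) ≤ r
  · rw [if_pos (by omega), mul_pow]
    gcongr
    exact hs hj
  · simp [hw j (by omega)]

end RectangularDiagonal

theorem diagDec_sub_diagTrunc (d n : ℕ) (s : ℕ → ℝ) (k : ℕ) :
    diagDec d n s - diagTrunc d n s k = diagDec d n fun i => if i < k then 0 else s i := by
  ext i j
  simp only [Matrix.sub_apply, diagDec, diagTrunc, of_apply]
  split_ifs <;> grind

theorem diagTrunc_eq_diagDec_mul_diagonal (d n : ℕ) (s : ℕ → ℝ) (k : ℕ) :
    diagTrunc d n s k =
      diagDec d n s * diagonal fun j : Fin n => if (j : ℕ) < k then (1 : ℝ) else 0 := by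
  ext i j
  simp only [mul_diagonal, diagDec, diagTrunc, of_apply]
  split_ifs <;> simp_all

theorem rank_diagTrunc_le (d n : ℕ) (s : ℕ → ℝ) (k : ℕ) : (diagTrunc d n s k).rank ≤ k := by
  classical
  rw [diagTrunc_eq_diagDec_mul_diagonal]
  refine (rank_mul_le_right _ _).trans ?_
  rw [rank_diagonal]
  simpa using Fintype.card_le_of_injective (fun j : {j : Fin n // (j : ℕ) < k} => (⟨j, j.2⟩ : Fin k))
    fun a b h => Subtype.ext (Fin.ext (Fin.mk.inj h))

namespace SVDData

variable {d n : ℕ} {M : Matrix (Fin d) (Fin n) ℝ} (sd : SVDData d n M)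

theorem rank_trunc_le (k : ℕ) : (sd.trunc k).rank ≤ k :=
  (rank_mul_le_left _ _).trans <| (rank_mul_le_right _ _).trans <| rank_diagTrunc_le d n sd.s k

theorem sub_trunc (k : ℕ) :
    M - sd.trunc k = sd.U * diagDec d n (fun i => if i < k then 0 else sd.s i) * sd.Vᵀ := by
  rw [trunc, ← diagDec_sub_diagTrunc, Matrix.mul_sub, Matrix.sub_mul, ← sd.eq]

theorem s_le_l2_opNorm_sub {X : Matrix (Fin d) (Fin n) ℝ} {r : ℕ} (hX : X.rank ≤ r)
    (hd : r < d) (hn : r < n) : sd.s r ≤ ‖M - X‖ := by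
  obtain ⟨U, V, s, hU, hV, hs0, hs, rfl⟩ := sd
  obtain ⟨w, hw0, hw, hXVw⟩ :=
    exists_ne_zero_mulVec_eq_zero_of_rank_le (X * V) ((rank_mul_le_left _ _).trans hX) hn
  have hMX : (U * diagDec d n s * Vᵀ - X) *ᵥ (V *ᵥ w) = U *ᵥ (diagDec d n s *ᵥ w) := by
    rw [sub_mulVec, mulVec_mulVec _ X, hXVw, sub_zero, mulVec_mulVec, Matrix.mul_assoc,
      Matrix.mul_assoc, hV, Matrix.mul_one, ← mulVec_mulVec]
  have hw_pos : 0 < ‖toLp 2 w‖ := by simpa using hw0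
  refine le_of_mul_le_mul_right ?_ hw_pos
  calc s r * ‖toLp 2 w‖ ≤ ‖toLp 2 (diagDec d n s *ᵥ w)‖ :=
        mul_norm_toLp_le_norm_toLp_diagDec_mulVec hs (hs0 r) hd hw
    _ = ‖toLp 2 ((U * diagDec d n s * Vᵀ - X) *ᵥ (V *ᵥ w))‖ := by
        rw [hMX, norm_toLp_mulVec_of_transpose_mul_self_eq_one hU]
    _ ≤ ‖U * diagDec d n s * Vᵀ - X‖ * ‖toLp 2 w‖ := by
        grw [norm_toLp_mulVec_le, norm_toLp_mulVec_of_transpose_mul_self_eq_one hV]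

theorem l2_opNorm_sub_trunc_le {X : Matrix (Fin d) (Fin n) ℝ} {r : ℕ} (hX : X.rank ≤ r) :
    ‖M - sd.trunc r‖ ≤ ‖M - X‖ := by
  rw [sub_trunc]
  refine (l2_opNorm_mul_mul_transpose_le sd.orthU sd.orthV _).trans <|
    l2_opNorm_diagDec_le _ (norm_nonneg _) fun j hjd hjn => ?_
  split_ifs with hj
  · simp
  · rw [abs_of_nonneg (sd.nonneg j)]
    exact (sd.anti _ _ (not_lt.1 hj)).trans (sd.s_le_l2_opNorm_sub hX (by omega) (by omega))

end SVDData

theorem exact_rank_recovery_bound_general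
    {d n : ℕ} (X Xt : Matrix (Fin d) (Fin n) ℝ) (r : ℕ)
    (hrank : X.rank ≤ r)
    (ε : ℝ) (h : specNorm (Xt - X) ≤ ε * frobNorm X)
    (sXt : SVDData d n Xt) :
    frobNorm (sXt.trunc r - X) ≤ 2 * Real.sqrt (2 * r) * ε * frobNorm X := by
  have hspec : ‖sXt.trunc r - X‖ ≤ 2 * (ε * frobNorm X) :=
    calc ‖sXt.trunc r - X‖ = ‖(Xt - X) - (Xt - sXt.trunc r)‖ := by congr 1; abel
      _ ≤ ‖Xt - X‖ + ‖Xt - sXt.trunc r‖ := norm_sub_le _ _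
      _ ≤ 2 * ‖Xt - X‖ := by linarith [sXt.l2_opNorm_sub_trunc_le hrank]
      _ ≤ 2 * (ε * frobNorm X) := by gcongr; exact h
  have hrank₂ : ((sXt.trunc r - X).rank : ℝ) ≤ 2 * r := by
    have := (rank_sub_le (sXt.trunc r) X).trans (add_le_add (sXt.rank_trunc_le r) hrank)
    exact_mod_cast this.trans (by omega)
  calc frobNorm (sXt.trunc r - X) ≤ √(sXt.trunc r - X).rank * ‖sXt.trunc r - X‖ :=
        frobNorm_le_sqrt_rank_mul_l2_opNorm _
    _ ≤ √(2 * r) * (2 * (ε * frobNorm X)) := by gcongr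
    _ = 2 * √(2 * r) * ε * frobNorm X := by ring

/-- Proposition 1 (exactly low-rank case): if X is a real d×n matrix of rank at most r, X̃
satisfies ‖X̃ − X‖₂ ≤ ε·‖X‖_F with ε ≥ 0, and X̂ = X̃_r is the best rank-r approximation
(truncated SVD) of X̃, then ‖X̂ − X‖_F ≤ 2·sqrt(2r)·ε·‖X‖_F. -/
theorem exact_rank_recovery_bound
    {d n : ℕ} (X Xt : Matrix (Fin d) (Fin n) ℝ) (r : ℕ)
    (hrank : X.rank ≤ r)
    (ε : ℝ) (hε : 0 ≤ ε) (h : specNorm (Xt - X) ≤ ε * frobNorm X)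
    (sXt : SVDData d n Xt) :
    frobNorm (sXt.trunc r - X) ≤ 2 * Real.sqrt (2 * r) * ε * frobNorm X :=
  exact_rank_recovery_bound_general X Xt r hrank ε h sXt
end
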